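/- arXiv:2602.19658 — 6 statements merged into one kernel-verified Lean document; each statement's English description precedes it below -/
import Mathlib

section
/- Let 0 ≤ a < b ≤ 1. Then the number of grid points lying in [a,b] satisfies #{i ∈ {0,…,n} : t_i ∈ [a,b]} ≤ M·n·(b−a) + 1. -/
open Set

/-- Under a time-transformed observation scheme `t i = f⁻¹(i/n)` with
`M⁻¹ < f' < M`, the number of observation times in `[a,b]` is at most
`M·n·(b−a) + 1`. -/
theorem stmt_0 (M : ℝ) (hM : 1 < M) (n : ℕ) (hn : 1 ≤ n)
    (f f' : ℝ → ℝ)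
    (hmono : StrictMonoOn f (Icc 0 1))
    (hbij : Set.BijOn f (Icc 0 1) (Icc 0 1))
    (hf0 : f 0 = 0) (hf1 : f 1 = 1)
    (hderiv : ∀ x ∈ Icc (0:ℝ) 1, HasDerivWithinAt f (f' x) (Icc 0 1) x)
    (hcont : ContinuousOn f' (Icc 0 1))
    (hlb : ∀ x ∈ Icc (0:ℝ) 1, M⁻¹ < f' x)
    (hub : ∀ x ∈ Icc (0:ℝ) 1, f' x < M)
    (t : ℕ → ℝ)
    (ht : ∀ i ≤ n, t i ∈ Icc (0:ℝ) 1 ∧ f (t i) = i / n)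
    (a b : ℝ) (ha : 0 ≤ a) (hab : a < b) (hb : b ≤ 1) :
    (((Finset.range (n + 1)).filter (fun i => t i ∈ Icc a b)).card : ℝ)
      ≤ M * n * (b - a) + 1 := by
  have hM0 : (0:ℝ) < M := lt_trans one_pos hM
  have hn0 : (0:ℝ) < n := by exact_mod_cast hn
  have haI : a ∈ Icc (0:ℝ) 1 := ⟨ha, le_trans hab.le hb⟩
  have hbI : b ∈ Icc (0:ℝ) 1 := ⟨le_trans ha hab.le, hb⟩
  -- f a ≥ 0 etc
  have hfa0 : 0 ≤ f a := (hbij.mapsTo haI).1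
  have hfab : f a ≤ f b := (hmono.monotoneOn) haI hbI hab.le
  -- MVT upper bound
  have hMVT : f b - f a ≤ M * (b - a) := by
    have hbound : ∀ x ∈ Icc (0:ℝ) 1, ‖f' x‖ ≤ M := by
      intro x hx
      have h1 := hlb x hx
      have h2 := hub x hx
      have hMi : (0:ℝ) < M⁻¹ := inv_pos.mpr hM0
      rw [Real.norm_eq_abs, abs_le]
      constructor <;> nlinarith
    have := Convex.norm_image_sub_le_of_norm_hasDerivWithin_le hderiv hbound
      (convex_Icc 0 1) haI hbI
    rw [Real.norm_eq_abs, Real.norm_eq_abs, abs_of_nonneg (by linarith : (0:ℝ) ≤ b - a)] at this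
    calc f b - f a ≤ |f b - f a| := le_abs_self _
      _ ≤ M * (b - a) := this
  set m : ℕ := ⌈(n : ℝ) * f a⌉₊ with hm
  set k : ℕ := ⌊(n : ℝ) * f b⌋₊ with hk
  have hsub : (Finset.range (n + 1)).filter (fun i => t i ∈ Icc a b) ⊆ Finset.Icc m k := by
    intro i hi
    simp only [Finset.mem_filter, Finset.mem_range] at hi
    obtain ⟨hin, hti⟩ := hi
    have hin' : i ≤ n := Nat.lt_succ_iff.mp hin
    obtain ⟨htI, hfti⟩ := ht i hin'
    have h1 : f a ≤ (i : ℝ) / n := by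
      rw [← hfti]; exact hmono.monotoneOn haI htI hti.1
    have h2 : (i : ℝ) / n ≤ f b := by
      rw [← hfti]; exact hmono.monotoneOn htI hbI hti.2
    have h1' : (n : ℝ) * f a ≤ (i : ℝ) := by
      rw [div_le_iff₀ hn0] at h2
      rw [le_div_iff₀ hn0] at h1
      linarith
    have h2' : (i : ℝ) ≤ (n : ℝ) * f b := by
      rw [div_le_iff₀ hn0] at h2; linarith
    refine Finset.mem_Icc.mpr ⟨Nat.ceil_le.mpr h1', Nat.le_floor h2'⟩
  have hcard := Finset.card_le_card hsub
  have hcardR : (((Finset.range (n + 1)).filter (fun i => t i ∈ Icc a b)).card : ℝ)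
      ≤ (n : ℝ) * f b - (n : ℝ) * f a + 1 := by
    rcases le_or_gt m k with hle | hlt
    · have : (Finset.Icc m k).card = k + 1 - m := Nat.card_Icc m k
      have hcast : ((Finset.Icc m k).card : ℝ) = (k : ℝ) + 1 - m := by
        rw [this, Nat.cast_sub (by omega)]; push_cast; ring
      have h1 : (k : ℝ) ≤ (n : ℝ) * f b := Nat.floor_le (by nlinarith)
      have h2 : (n : ℝ) * f a ≤ (m : ℝ) := Nat.le_ceil _
      calc (((Finset.range (n + 1)).filter (fun i => t i ∈ Icc a b)).card : ℝ)
          ≤ ((Finset.Icc m k).card : ℝ) := by exact_mod_cast hcard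
        _ = (k : ℝ) + 1 - m := hcast
        _ ≤ (n : ℝ) * f b - (n : ℝ) * f a + 1 := by linarith
    · have : (Finset.Icc m k).card = 0 := by
        simp [Finset.Icc_eq_empty_of_lt hlt]
      have h0 : ((Finset.range (n + 1)).filter (fun i => t i ∈ Icc a b)).card = 0 := by omega
      rw [h0]
      have : (0:ℝ) ≤ (n : ℝ) * f b - (n : ℝ) * f a := by nlinarith
      push_cast; linarith
  have : (n : ℝ) * f b - (n : ℝ) * f a + 1 ≤ M * n * (b - a) + 1 := by nlinarith
  linarith
end

section
/- Let 0 ≤ a < b ≤ 1. Then the number of grid points lying in [a,b] satisfies #{i ∈ {0,…,n} : t_i ∈ [a,b]} ≥ n·(b−a)/M − 1. -/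
open Set

/-! The grid points are the preimages of the equispaced points `i / n`, so every index `i` with
`n f(a) ≤ i ≤ n f(b)` gives a grid point in `[a, b]`; there are more than `n (f(b) - f(a)) - 1`
such integers, and `f(b) - f(a) ≥ (b - a) / M` by the mean value theorem. -/

theorem Convex.mul_sub_le_image_sub_of_hasDerivWithinAt {D : Set ℝ} (hD : Convex ℝ D)
    {f f' : ℝ → ℝ} {C : ℝ} (hf : ∀ x ∈ D, HasDerivWithinAt f (f' x) D x)
    (hC : ∀ x ∈ D, C ≤ f' x) :
    ∀ᵉ (x ∈ D) (y ∈ D), x ≤ y → C * (y - x) ≤ f y - f x := by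
  have hint : ∀ x ∈ interior D, HasDerivAt f (f' x) x := fun x hx =>
    (hf x (interior_subset hx)).hasDerivAt (mem_interior_iff_mem_nhds.mp hx)
  exact hD.mul_sub_le_image_sub_of_le_deriv (fun x hx => (hf x hx).continuousWithinAt)
    (fun x hx => (hint x hx).differentiableAt.differentiableWithinAt)
    (fun x hx => (hint x hx).deriv ▸ hC x (interior_subset hx))

theorem sub_sub_one_lt_card_Icc_ceil_floor {x : ℝ} (hx : 0 ≤ x) (y : ℝ) :
    y - x - 1 < (Finset.Icc ⌈x⌉₊ ⌊y⌋₊).card := by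
  have htsub : ((⌊y⌋₊ + 1 : ℕ) : ℝ) ≤ ((⌊y⌋₊ + 1 - ⌈x⌉₊ : ℕ) : ℝ) + ⌈x⌉₊ := by
    exact_mod_cast le_tsub_add
  rw [Nat.card_Icc]
  push_cast at htsub
  linarith [Nat.sub_one_lt_floor y, Nat.ceil_lt_add_one hx]

theorem Icc_ceil_floor_subset_filter_mem_Icc {s : Set ℝ} {f : ℝ → ℝ} (hf : StrictMonoOn f s)
    {n : ℕ} (hn : 0 < n) {t : ℕ → ℝ} (ht : ∀ i ≤ n, t i ∈ s ∧ f (t i) = i / n)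
    {a b : ℝ} (ha : a ∈ s) (hb : b ∈ s) (hfb₀ : 0 ≤ f b) (hfb₁ : f b ≤ 1) :
    Finset.Icc ⌈n * f a⌉₊ ⌊n * f b⌋₊ ⊆
      (Finset.range (n + 1)).filter (fun i => t i ∈ Icc a b) := by
  intro i hi
  have hnR : (0 : ℝ) < n := Nat.cast_pos.mpr hn
  rw [Finset.mem_Icc, Nat.ceil_le, Nat.le_floor_iff (by positivity)] at hi
  have hin : i ≤ n := by
    exact_mod_cast hi.2.trans (mul_le_of_le_one_right hnR.le hfb₁)
  obtain ⟨hts, hft⟩ := ht i hin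
  simp only [Finset.mem_filter, Finset.mem_range, mem_Icc]
  refine ⟨Nat.lt_succ_of_le hin, (hf.le_iff_le ha hts).mp ?_, (hf.le_iff_le hts hb).mp ?_⟩
  · rw [hft, le_div_iff₀' hnR]
    exact hi.1
  · rw [hft, div_le_iff₀' hnR]
    exact hi.2

theorem stmt_1_general (M : ℝ) (n : ℕ) (hn : 1 ≤ n)
    (f f' : ℝ → ℝ)
    (hmono : StrictMonoOn f (Icc 0 1))
    (hf0 : f 0 = 0) (hf1 : f 1 = 1)
    (hderiv : ∀ x ∈ Icc (0:ℝ) 1, HasDerivWithinAt f (f' x) (Icc 0 1) x)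
    (hlb : ∀ x ∈ Icc (0:ℝ) 1, M⁻¹ < f' x)
    (t : ℕ → ℝ)
    (ht : ∀ i ≤ n, t i ∈ Icc (0:ℝ) 1 ∧ f (t i) = i / n)
    (a b : ℝ) (ha : 0 ≤ a) (hab : a < b) (hb : b ≤ 1) :
    (((Finset.range (n + 1)).filter (fun i => t i ∈ Icc a b)).card : ℝ)
      ≥ n * (b - a) / M - 1 := by
  have haI : a ∈ Icc (0:ℝ) 1 := ⟨ha, hab.le.trans hb⟩
  have hbI : b ∈ Icc (0:ℝ) 1 := ⟨ha.trans hab.le, hb⟩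
  have hfa : 0 ≤ f a := hf0 ▸ hmono.monotoneOn (left_mem_Icc.mpr zero_le_one) haI ha
  have hfb : f b ≤ 1 := hf1 ▸ hmono.monotoneOn hbI (right_mem_Icc.mpr zero_le_one) hb
  have hgrowth : M⁻¹ * (b - a) ≤ f b - f a :=
    (convex_Icc 0 1).mul_sub_le_image_sub_of_hasDerivWithinAt hderiv
      (fun x hx => (hlb x hx).le) a haI b hbI hab.le
  have hsub := Icc_ceil_floor_subset_filter_mem_Icc hmono hn ht haI hbI
    (hfa.trans (hmono.monotoneOn haI hbI hab.le)) hfb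
  calc n * (b - a) / M - 1 = n * (M⁻¹ * (b - a)) - 1 := by ring
    _ ≤ n * (f b - f a) - 1 := by gcongr
    _ = n * f b - n * f a - 1 := by ring
    _ ≤ _ := (sub_sub_one_lt_card_Icc_ceil_floor (by positivity) _).le
    _ ≤ _ := by exact_mod_cast Finset.card_le_card hsub

/-- Under a time-transformed observation scheme `t i = f⁻¹(i/n)` with
`M⁻¹ < f' < M`, the number of observation times in `[a,b]` is at most
`M·n·(b−a) + 1`. -/
theorem stmt_1 (M : ℝ) (hM : 1 < M) (n : ℕ) (hn : 1 ≤ n)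
    (f f' : ℝ → ℝ)
    (hmono : StrictMonoOn f (Icc 0 1))
    (hbij : Set.BijOn f (Icc 0 1) (Icc 0 1))
    (hf0 : f 0 = 0) (hf1 : f 1 = 1)
    (hderiv : ∀ x ∈ Icc (0:ℝ) 1, HasDerivWithinAt f (f' x) (Icc 0 1) x)
    (hcont : ContinuousOn f' (Icc 0 1))
    (hlb : ∀ x ∈ Icc (0:ℝ) 1, M⁻¹ < f' x)
    (hub : ∀ x ∈ Icc (0:ℝ) 1, f' x < M)
    (t : ℕ → ℝ)
    (ht : ∀ i ≤ n, t i ∈ Icc (0:ℝ) 1 ∧ f (t i) = i / n)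
    (a b : ℝ) (ha : 0 ≤ a) (hab : a < b) (hb : b ≤ 1) :
    (((Finset.range (n + 1)).filter (fun i => t i ∈ Icc a b)).card : ℝ)
      ≥ n * (b - a) / M - 1 :=
  stmt_1_general M n hn f f' hmono hf0 hf1 hderiv hlb t ht a b ha hab hb
end

section
/- Let k ∈ ℕ with 1 ≤ k ≤ min(n_k, n_l). Then the number of overlapping pre-averaging windows satisfies #{(i,j) : 0 ≤ i ≤ n_k − k, 0 ≤ j ≤ n_l − k and (t_i, t_{i+k}] ∩ (s_j, s_{j+k}] ≠ ∅} ≤ (n_k + 1)·(M²·k·(n_l/n_k + 1) + 1). -/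
/-!
Fix a window `(t_i, t_{i+k}]` of the first grid. Since `f' > M⁻¹` and `φ' < M`, the map
`φ ∘ f⁻¹` is `M²`-Lipschitz, so `φ` increases by at most `M² k / n_k` across the window.
A window `(s_j, s_{j+k}]` of the second grid can only meet it if `j / n_l` lies in an interval
of length `(k + M² k n_l / n_k) / n_l`, which leaves at most `k + M² k n_l / n_k + 1` choices
of `j` for each of the at most `n_k + 1` choices of `i`.
-/

open Set
open scoped Classical Finset

theorem Convex.mul_sub_le_image_sub_of_le_hasDerivWithinAt {D : Set ℝ} (hD : Convex ℝ D)
    {f f' : ℝ → ℝ} (hf : ∀ x ∈ D, HasDerivWithinAt f (f' x) D x) {C : ℝ}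
    (hC : ∀ x ∈ D, C ≤ f' x) {x y : ℝ} (hx : x ∈ D) (hy : y ∈ D) (hxy : x ≤ y) :
    C * (y - x) ≤ f y - f x :=
  hD.mul_sub_le_image_sub_of_le_deriv (fun z hz => (hf z hz).continuousWithinAt)
    (fun z hz => ((hf z (interior_subset hz)).differentiableWithinAt).mono interior_subset)
    (fun z hz => by
      rw [((hf z (interior_subset hz)).hasDerivAt (mem_interior_iff_mem_nhds.1 hz)).deriv]
      exact hC z (interior_subset hz))
    x hx y hy hxy

theorem Convex.image_sub_le_mul_sub_of_hasDerivWithinAt_le {D : Set ℝ} (hD : Convex ℝ D)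
    {f f' : ℝ → ℝ} (hf : ∀ x ∈ D, HasDerivWithinAt f (f' x) D x) {C : ℝ}
    (hC : ∀ x ∈ D, f' x ≤ C) {x y : ℝ} (hx : x ∈ D) (hy : y ∈ D) (hxy : x ≤ y) :
    f y - f x ≤ C * (y - x) := by
  have := hD.mul_sub_le_image_sub_of_le_hasDerivWithinAt (f := fun z => -f z) (C := -C)
    (fun z hz => (hf z hz).neg) (fun z hz => neg_le_neg (hC z hz)) hx hy hxy
  linarith

theorem Convex.sub_le_sq_mul_sub_of_hasDerivWithinAt {D : Set ℝ} (hD : Convex ℝ D)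
    {M : ℝ} (hM : 0 < M) {f f' φ φ' : ℝ → ℝ}
    (hf : ∀ x ∈ D, HasDerivWithinAt f (f' x) D x) (hφ : ∀ x ∈ D, HasDerivWithinAt φ (φ' x) D x)
    (hf' : ∀ x ∈ D, M⁻¹ < f' x) (hφ' : ∀ x ∈ D, φ' x < M)
    {x y : ℝ} (hx : x ∈ D) (hy : y ∈ D) (hfxy : f x ≤ f y) :
    φ y - φ x ≤ M ^ 2 * (f y - f x) := by
  have hf_growth : ∀ ⦃a b⦄, a ∈ D → b ∈ D → a ≤ b → M⁻¹ * (b - a) ≤ f b - f a :=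
    fun _ _ ha hb hab =>
      hD.mul_sub_le_image_sub_of_le_hasDerivWithinAt hf (fun z hz => (hf' z hz).le) ha hb hab
  have hxy : x ≤ y := by
    by_contra! hyx
    have : 0 < M⁻¹ * (x - y) := mul_pos (inv_pos.2 hM) (sub_pos.2 hyx)
    linarith [hf_growth hy hx hyx.le]
  calc φ y - φ x ≤ M * (y - x) :=
        hD.image_sub_le_mul_sub_of_hasDerivWithinAt_le hφ (fun z hz => (hφ' z hz).le) hx hy hxy
    _ = M ^ 2 * (M⁻¹ * (y - x)) := by field_simp
    _ ≤ M ^ 2 * (f y - f x) := by gcongr; exact hf_growth hx hy hxy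

theorem Finset.card_filter_product_le_mul {α β : Type*} (s : Finset α) (t : Finset β)
    (P : α × β → Prop) [DecidablePred P] (n : ℕ) (h : ∀ a ∈ s, #{b ∈ t | P (a, b)} ≤ n) :
    #{p ∈ s ×ˢ t | P p} ≤ #s * n := by
  calc #{p ∈ s ×ˢ t | P p} = ∑ a ∈ s, #{b ∈ t | P (a, b)} := by
        simp only [card_filter, sum_product]
    _ ≤ #s * n := by simpa using sum_le_card_nsmul s _ n h

theorem Finset.card_le_floor_add_one_of_forall_mem_Ioo (S : Finset ℕ) {a L : ℝ}
    (h : ∀ j ∈ S, (j : ℝ) ∈ Set.Ioo a (a + L)) : #S ≤ ⌊L⌋₊ + 1 := by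
  rcases S.eq_empty_or_nonempty with rfl | hne
  · simp
  have hmin := h _ (S.min'_mem hne)
  have hsub : S ⊆ Finset.Icc (S.min' hne) (S.min' hne + ⌊L⌋₊) := fun j hj => by
    have hle := S.min'_le j hj
    have hgap : j - S.min' hne ≤ ⌊L⌋₊ := by
      apply Nat.le_floor
      push_cast [hle]
      linarith [(h j hj).2, hmin.1]
    exact Finset.mem_Icc.2 ⟨hle, by omega⟩
  have := Finset.card_le_card hsub
  rw [Nat.card_Icc] at this
  omega

theorem lt_and_lt_of_Ioc_inter_Ioc_nonempty {α : Type*} [LinearOrder α] {a b c d : α}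
    (h : (Ioc a b ∩ Ioc c d).Nonempty) : a < d ∧ c < b := by
  simp only [Set.Ioc_inter_Ioc, Set.nonempty_Ioc, max_lt_iff, lt_min_iff] at h
  exact ⟨h.2.1, h.1.2⟩

theorem index_mem_Ioo_of_Ioc_inter_Ioc_nonempty {D : Set ℝ} {φ : ℝ → ℝ} (hφ : StrictMonoOn φ D)
    {x x' y y' : ℝ} (hx : x ∈ D) (hx' : x' ∈ D) (hy : y ∈ D) (hy' : y' ∈ D)
    {n j k δ : ℝ} (hn : 0 < n) (hφy : φ y = j / n) (hφy' : φ y' = (j + k) / n)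
    (hδ : φ x' - φ x ≤ δ) (hov : (Ioc x x' ∩ Ioc y y').Nonempty) :
    j ∈ Ioo (n * φ x - k) (n * φ x - k + (k + n * δ)) := by
  obtain ⟨hxy', hyx'⟩ := lt_and_lt_of_Ioc_inter_Ioc_nonempty hov
  have hlow : φ x < (j + k) / n := hφy' ▸ hφ hx hy' hxy'
  have hupp : j / n < φ x' := hφy ▸ hφ hy hx' hyx'
  rw [lt_div_iff₀ hn] at hlow
  rw [div_lt_iff₀ hn] at hupp
  constructor <;> nlinarith

theorem card_filter_Ioc_inter_Ioc_nonempty_le {D : Set ℝ} {φ : ℝ → ℝ} (hφ : StrictMonoOn φ D)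
    {s : ℕ → ℝ} {n k : ℕ} (hn : 0 < n) (hk : k ≤ n) (hs : ∀ j ≤ n, s j ∈ D ∧ φ (s j) = j / n)
    {x x' δ : ℝ} (hx : x ∈ D) (hx' : x' ∈ D) (hδ : φ x' - φ x ≤ δ) :
    #{j ∈ Finset.range (n - k + 1) | (Ioc x x' ∩ Ioc (s j) (s (j + k))).Nonempty}
      ≤ ⌊k + n * δ⌋₊ + 1 := by
  refine Finset.card_le_floor_add_one_of_forall_mem_Ioo _ (a := n * φ x - k) fun j hj => ?_
  obtain ⟨hj, hov⟩ := Finset.mem_filter.1 hj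
  have hjk : j + k ≤ n := by have := Finset.mem_range.1 hj; omega
  obtain ⟨hsj, hφsj⟩ := hs j (by omega)
  obtain ⟨hsjk, hφsjk⟩ := hs (j + k) hjk
  exact index_mem_Ioo_of_Ioc_inter_Ioc_nonempty hφ hx hx' hsj hsjk (by exact_mod_cast hn) hφsj
    (by exact_mod_cast hφsjk) hδ hov

theorem stmt_3_general (M : ℝ) (hM : 1 < M) (nk nl : ℕ)
    (f f' φ φ' : ℝ → ℝ)
    (hφmono : StrictMonoOn φ (Icc 0 1))
    (hfderiv : ∀ x ∈ Icc (0:ℝ) 1, HasDerivWithinAt f (f' x) (Icc 0 1) x)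
    (hφderiv : ∀ x ∈ Icc (0:ℝ) 1, HasDerivWithinAt φ (φ' x) (Icc 0 1) x)
    (hflb : ∀ x ∈ Icc (0:ℝ) 1, M⁻¹ < f' x)
    (hφub : ∀ x ∈ Icc (0:ℝ) 1, φ' x < M)
    (t s : ℕ → ℝ)
    (ht : ∀ i ≤ nk, t i ∈ Icc (0:ℝ) 1 ∧ f (t i) = i / nk)
    (hs : ∀ j ≤ nl, s j ∈ Icc (0:ℝ) 1 ∧ φ (s j) = j / nl)
    (k : ℕ) (hk1 : 1 ≤ k) (hk2 : k ≤ min nk nl) :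
    ((((Finset.range (nk - k + 1)) ×ˢ (Finset.range (nl - k + 1))).filter
        (fun p => (Set.Ioc (t p.1) (t (p.1 + k)) ∩ Set.Ioc (s p.2) (s (p.2 + k))).Nonempty)).card : ℝ)
      ≤ ((nk : ℝ) + 1) * (M ^ 2 * k * ((nl : ℝ) / nk + 1) + 1) := by
  have hkk : k ≤ nk := hk2.trans (min_le_left _ _)
  have hkl : k ≤ nl := hk2.trans (min_le_right _ _)
  have hnk' : (0 : ℝ) < nk := by exact_mod_cast hk1.trans hkk
  set L : ℝ := k + nl * (M ^ 2 * (k / nk))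
  have hfiber : ∀ i ∈ Finset.range (nk - k + 1),
      #{j ∈ Finset.range (nl - k + 1) | (Ioc (t i) (t (i + k)) ∩ Ioc (s j) (s (j + k))).Nonempty}
        ≤ ⌊L⌋₊ + 1 := fun i hi => by
    have hik : i + k ≤ nk := by have := Finset.mem_range.1 hi; omega
    obtain ⟨hti, hfti⟩ := ht i (by omega)
    obtain ⟨htik, hftik⟩ := ht (i + k) hik
    have hstep : f (t (i + k)) - f (t i) = k / nk := by rw [hfti, hftik]; push_cast; ring
    refine card_filter_Ioc_inter_Ioc_nonempty_le hφmono (by omega) hkl hs hti htik ?_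
    rw [← hstep]
    exact (convex_Icc 0 1).sub_le_sq_mul_sub_of_hasDerivWithinAt (by linarith) hfderiv hφderiv
      hflb hφub hti htik (sub_nonneg.1 (hstep ▸ by positivity))
  have hcount := Finset.card_filter_product_le_mul _ _
    (fun p => (Ioc (t p.1) (t (p.1 + k)) ∩ Ioc (s p.2) (s (p.2 + k))).Nonempty) _ hfiber
  have hL : 0 ≤ L := by positivity
  rw [Finset.card_range] at hcount
  calc _ ≤ ((nk - k + 1 : ℕ) : ℝ) * (⌊L⌋₊ + 1) := by exact_mod_cast hcount
    _ ≤ ((nk : ℝ) + 1) * (L + 1) := by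
      gcongr
      · exact_mod_cast Nat.succ_le_succ (Nat.sub_le nk k)
      · exact Nat.floor_le hL
    _ ≤ ((nk : ℝ) + 1) * (M ^ 2 * k * ((nl : ℝ) / nk + 1) + 1) := by
      have hMk : (k : ℝ) ≤ M ^ 2 * k := le_mul_of_one_le_left (by positivity) (by nlinarith)
      have : L = k + M ^ 2 * k * (nl / nk) := by ring
      gcongr
      linarith

/-- The Hayashi–Yoshida sum with window length `k` over two comparable
time-transformed grids contains at most `(n_k+1)·(M²·k·(n_l/n_k + 1) + 1)`
non-zero summands. -/
theorem stmt_3 (M : ℝ) (hM : 1 < M) (nk nl : ℕ) (hnk : 1 ≤ nk) (hnl : 1 ≤ nl)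
    (f f' φ φ' : ℝ → ℝ)
    (hfmono : StrictMonoOn f (Icc 0 1)) (hφmono : StrictMonoOn φ (Icc 0 1))
    (hfbij : Set.BijOn f (Icc 0 1) (Icc 0 1)) (hφbij : Set.BijOn φ (Icc 0 1) (Icc 0 1))
    (hf0 : f 0 = 0) (hf1 : f 1 = 1) (hφ0 : φ 0 = 0) (hφ1 : φ 1 = 1)
    (hfderiv : ∀ x ∈ Icc (0:ℝ) 1, HasDerivWithinAt f (f' x) (Icc 0 1) x)
    (hφderiv : ∀ x ∈ Icc (0:ℝ) 1, HasDerivWithinAt φ (φ' x) (Icc 0 1) x)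
    (hfcont : ContinuousOn f' (Icc 0 1)) (hφcont : ContinuousOn φ' (Icc 0 1))
    (hflb : ∀ x ∈ Icc (0:ℝ) 1, M⁻¹ < f' x) (hfub : ∀ x ∈ Icc (0:ℝ) 1, f' x < M)
    (hφlb : ∀ x ∈ Icc (0:ℝ) 1, M⁻¹ < φ' x) (hφub : ∀ x ∈ Icc (0:ℝ) 1, φ' x < M)
    (t s : ℕ → ℝ)
    (ht : ∀ i ≤ nk, t i ∈ Icc (0:ℝ) 1 ∧ f (t i) = i / nk)
    (hs : ∀ j ≤ nl, s j ∈ Icc (0:ℝ) 1 ∧ φ (s j) = j / nl)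
    (k : ℕ) (hk1 : 1 ≤ k) (hk2 : k ≤ min nk nl) :
    ((((Finset.range (nk - k + 1)) ×ˢ (Finset.range (nl - k + 1))).filter
        (fun p => (Set.Ioc (t p.1) (t (p.1 + k)) ∩ Set.Ioc (s p.2) (s (p.2 + k))).Nonempty)).card : ℝ)
      ≤ ((nk : ℝ) + 1) * (M ^ 2 * k * ((nl : ℝ) / nk + 1) + 1) :=
  stmt_3_general M hM nk nl f f' φ φ' hφmono hfderiv hφderiv hflb hφub t s ht hs k hk1 hk2
end

section
/- Let c > 0, θ > 0 and m_k, m_l ∈ (0,1], and for n ∈ ℕ set n_k = ⌈m_k·n⌉, n_l = ⌈m_l·n⌉, k_n = ⌈θ·√n⌉, and s_j = φ⁻¹(j/n_l). Then (1/k_n)·max{ | n_k·f(φ⁻¹((j+m)/n_l)) − n_k·f(s_j) − (n_k·f'(s_j)/(n_l·φ'(s_j)))·m | : 0 ≤ j ≤ n_l, m ∈ ℤ, |m| ≤ c·k_n, 0 ≤ j+m ≤ n_l } → 0 as n → ∞. -/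
/-! With `u = j / n_l` and `v = (j + m) / n_l`, the quantity is `n_k / k_n` times the first-order
Taylor remainder of `f ∘ φ⁻¹` between `u` and `v`, the derivative of `f ∘ φ⁻¹` at `u` being
`f'(s_j) / φ'(s_j)`. As `f'` and `φ'` are uniformly continuous and `φ⁻¹` is Lipschitz (`φ' > M⁻¹`),
this remainder is `o(|v - u|)` uniformly in `u`. Since `|v - u| ≤ c k_n / n_l = O(n^{-1/2})` and
`n_k |v - u| / k_n ≤ c n_k / n_l ≤ c / m_l`, the normalised error tends to `0`. -/

open Set Filter Topology

theorem IsCompact.exists_forall_abs_sub_sub_mul_le {s : Set ℝ} (hs : IsCompact s)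
    (hconv : Convex ℝ s) {f f' : ℝ → ℝ} (hf : ∀ x ∈ s, HasDerivWithinAt f (f' x) s x)
    (hf' : ContinuousOn f' s) {ε : ℝ} (hε : 0 < ε) :
    ∃ δ > 0, ∀ x ∈ s, ∀ y ∈ s, |y - x| < δ →
      |f y - f x - f' x * (y - x)| ≤ ε * |y - x| := by
  obtain ⟨δ, hδ, hf'δ⟩ :=
    Metric.uniformContinuousOn_iff.1 (hs.uniformContinuousOn_of_continuous hf') ε hε
  refine ⟨δ, hδ, fun x hx y hy hxy => ?_⟩
  have hg : ∀ t ∈ s ∩ Metric.ball x δ, HasDerivWithinAt (fun t => f t - f' x * t)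
      (f' t - f' x) (s ∩ Metric.ball x δ) t := fun t ht =>
    ((hf t ht.1).sub (hasDerivAt_const_mul (f' x)).hasDerivWithinAt).mono inter_subset_left
  have hbound : ∀ t ∈ s ∩ Metric.ball x δ, ‖f' t - f' x‖ ≤ ε := fun t ht =>
    (hf'δ t ht.1 x hx ht.2).le
  have hy' : y ∈ s ∩ Metric.ball x δ := ⟨hy, by rwa [Metric.mem_ball, Real.dist_eq]⟩
  have := (hconv.inter (convex_ball x δ)).norm_image_sub_le_of_norm_hasDerivWithin_le hg hbound
    ⟨hx, Metric.mem_ball_self hδ⟩ hy'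
  simp only [Real.norm_eq_abs] at this
  convert this using 2
  ring

theorem Convex.mul_abs_sub_le_abs_image_sub {s : Set ℝ} (hs : Convex ℝ s) {φ φ' : ℝ → ℝ}
    (hφ : ∀ x ∈ s, HasDerivWithinAt φ (φ' x) s x) {r : ℝ} (hr : ∀ x ∈ s, r ≤ φ' x)
    {x y : ℝ} (hx : x ∈ s) (hy : y ∈ s) : r * |y - x| ≤ |φ y - φ x| := by
  have hderiv : ∀ t ∈ s, HasDerivWithinAt (fun t => φ t - r * t) (φ' t - r) s t := fun t ht =>
    (hφ t ht).sub (hasDerivAt_const_mul r).hasDerivWithinAt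
  have hmono : MonotoneOn (fun t => φ t - r * t) s :=
    monotoneOn_of_hasDerivWithinAt_nonneg hs (fun t ht => (hderiv t ht).continuousWithinAt)
      (fun t ht => (hderiv t (interior_subset ht)).mono interior_subset)
      (fun t ht => sub_nonneg.2 (hr t (interior_subset ht)))
  rcases le_total x y with hxy | hyx
  · have := hmono hx hy hxy
    rw [abs_of_nonneg (sub_nonneg.2 hxy)]
    exact le_abs.2 (Or.inl (by linarith))
  · have := hmono hy hx hyx
    rw [abs_of_nonpos (sub_nonpos.2 hyx)]
    exact le_abs.2 (Or.inr (by linarith))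

theorem tendsto_natCeil_mul_sqrt_div_natCeil_mul {θ a : ℝ} (hθ : 0 ≤ θ) (ha : 0 < a) :
    Tendsto (fun n : ℕ => (⌈θ * √n⌉₊ : ℝ) / ⌈a * n⌉₊) atTop (𝓝 0) := by
  have hlim : Tendsto (fun n : ℕ => (θ + 1) / a * (√n)⁻¹) atTop (𝓝 0) := by
    simpa using (tendsto_inv_atTop_zero.comp
      (Real.tendsto_sqrt_atTop.comp tendsto_natCast_atTop_atTop)).const_mul ((θ + 1) / a)
  refine tendsto_of_tendsto_of_tendsto_of_le_of_le' tendsto_const_nhds hlim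
    (Eventually.of_forall fun n => by positivity) ?_
  filter_upwards [eventually_ge_atTop 1] with n hn
  have hsqrt : 1 ≤ √(n : ℝ) := Real.one_le_sqrt.2 (by exact_mod_cast hn)
  have hnum : (⌈θ * √n⌉₊ : ℝ) ≤ (θ + 1) * √n := by
    have := Nat.ceil_lt_add_one (mul_nonneg hθ (Real.sqrt_nonneg n))
    nlinarith
  have hden : a * n ≤ (⌈a * n⌉₊ : ℝ) := Nat.le_ceil _
  have hn0 : (0 : ℝ) < n := by exact_mod_cast hn
  calc (⌈θ * √n⌉₊ : ℝ) / ⌈a * n⌉₊ ≤ (θ + 1) * √n / (a * n) :=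
        div_le_div₀ (by positivity) hnum (by positivity) hden
    _ = (θ + 1) / a * (√n)⁻¹ := by
        field_simp
        exact Real.sq_sqrt hn0.le

theorem eventually_mul_natCeil_mul_sqrt_lt_mul_natCeil_mul {θ a c δ : ℝ} (hθ : 0 ≤ θ) (ha : 0 < a)
    (hδ : 0 < δ) : ∀ᶠ n : ℕ in atTop, 0 < ⌈a * n⌉₊ ∧ c * ⌈θ * √n⌉₊ < δ * ⌈a * n⌉₊ := by
  filter_upwards [((tendsto_natCeil_mul_sqrt_div_natCeil_mul hθ ha).const_mul c).eventually_lt_const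
    (by simpa using hδ), eventually_ge_atTop 1] with n hsmall hn
  have hpos : 0 < ⌈a * n⌉₊ := Nat.ceil_pos.2 (mul_pos ha (by exact_mod_cast hn))
  exact ⟨hpos, by rwa [← mul_div_assoc, div_lt_iff₀ (by exact_mod_cast hpos)] at hsmall⟩

theorem IsCompact.exists_forall_abs_comp_sub_sub_div_mul_le {s t : Set ℝ} (hs : IsCompact s)
    (hconv : Convex ℝ s) {f f' φ φ' ψ : ℝ → ℝ} (hf : ∀ x ∈ s, HasDerivWithinAt f (f' x) s x)
    (hf' : ContinuousOn f' s) (hφ : ∀ x ∈ s, HasDerivWithinAt φ (φ' x) s x)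
    (hφ' : ContinuousOn φ' s) {r : ℝ} (hr : 0 < r) (hrφ' : ∀ x ∈ s, r ≤ φ' x)
    (hψ : MapsTo ψ t s) (hφψ : ∀ u ∈ t, φ (ψ u) = u) {ε : ℝ} (hε : 0 < ε) :
    ∃ δ > 0, ∀ u ∈ t, ∀ v ∈ t, |v - u| < δ →
      |f (ψ v) - f (ψ u) - f' (ψ u) / φ' (ψ u) * (v - u)| ≤ ε * |v - u| := by
  have hφ'0 : ∀ x ∈ s, φ' x ≠ 0 := fun x hx => (hr.trans_le (hrφ' x hx)).ne'
  obtain ⟨A, hA⟩ := hs.exists_bound_of_continuousOn (hf'.div hφ' hφ'0)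
  set ε₀ := ε * r / (1 + |A|)
  have hε₀ : 0 < ε₀ := by positivity
  obtain ⟨δf, hδf, hTf⟩ := hs.exists_forall_abs_sub_sub_mul_le hconv hf hf' hε₀
  obtain ⟨δφ, hδφ, hTφ⟩ := hs.exists_forall_abs_sub_sub_mul_le hconv hφ hφ' hε₀
  refine ⟨r * min δf δφ, by positivity, fun u hu v hv hvu => ?_⟩
  set x := ψ u
  set y := ψ v
  have hx : x ∈ s := hψ hu
  have hy : y ∈ s := hψ hv
  have hφx : φ x = u := hφψ u hu
  have hφy : φ y = v := hφψ v hv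
  have hyx : r * |y - x| ≤ |v - u| := by
    simpa only [hφx, hφy] using hconv.mul_abs_sub_le_abs_image_sub hφ hrφ' hx hy
  have hyxδ : |y - x| < min δf δφ := lt_of_mul_lt_mul_left (hyx.trans_lt hvu) hr.le
  have hρ : |f' x / φ' x| ≤ |A| := (hA x hx).trans (le_abs_self A)
  have hf'x := hTf x hx y hy (hyxδ.trans_le (min_le_left _ _))
  have hφ'x := hTφ x hx y hy (hyxδ.trans_le (min_le_right _ _))
  rw [hφx, hφy] at hφ'x
  calc |f y - f x - f' x / φ' x * (v - u)|
      = |(f y - f x - f' x * (y - x)) - f' x / φ' x * (v - u - φ' x * (y - x))| := by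
        congr 1
        field_simp [hφ'0 x hx]
        ring
    _ ≤ |f y - f x - f' x * (y - x)| + |f' x / φ' x| * |v - u - φ' x * (y - x)| := by
        rw [← abs_mul]
        exact abs_sub _ _
    _ ≤ ε₀ * |y - x| + |A| * (ε₀ * |y - x|) := by gcongr
    _ = ε * (r * |y - x|) := by
        simp only [ε₀]
        field_simp
    _ ≤ ε * |v - u| := by gcongr

theorem natCeil_mul_div_natCeil_mul_le {a b : ℝ} (ha : a ≤ 1) (hb : 0 < b) (n : ℕ) :
    (⌈a * n⌉₊ : ℝ) / ⌈b * n⌉₊ ≤ 1 / b := by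
  have hnum : (⌈a * n⌉₊ : ℝ) ≤ n := by
    exact_mod_cast Nat.ceil_le.2 (mul_le_of_le_one_left n.cast_nonneg ha)
  refine div_le_of_le_mul₀ (Nat.cast_nonneg _) (by positivity) (hnum.trans ?_)
  rw [one_div_mul_eq_div, le_div_iff₀ hb, mul_comm]
  exact Nat.le_ceil _

theorem abs_sub_sub_mul_div_le_of_forall_abs_sub_sub_mul_le {F F' : ℝ → ℝ} {δ η : ℝ}
    (hF : ∀ u ∈ Icc (0 : ℝ) 1, ∀ v ∈ Icc (0 : ℝ) 1, |v - u| < δ →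
      |F v - F u - F' u * (v - u)| ≤ η * |v - u|)
    {ℓ j : ℕ} {m : ℤ} (hℓ : 0 < ℓ) (hj : j ≤ ℓ) (h₀ : 0 ≤ (j : ℤ) + m) (h₁ : (j : ℤ) + m ≤ ℓ)
    (hm : |(m : ℝ)| < δ * ℓ) :
    |F (((j : ℤ) + m : ℤ) / ℓ) - F (j / ℓ) - F' (j / ℓ) * (m / ℓ)| ≤ η * (|(m : ℝ)| / ℓ) := by
  have hℓ' : (0 : ℝ) < ℓ := by exact_mod_cast hℓ
  have hvu : (((j : ℤ) + m : ℤ) : ℝ) / ℓ - j / ℓ = m / ℓ := by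
    push_cast
    ring
  have hu : (j : ℝ) / ℓ ∈ Icc (0 : ℝ) 1 :=
    ⟨by positivity, div_le_one_of_le₀ (by exact_mod_cast hj) hℓ'.le⟩
  have hv : (((j : ℤ) + m : ℤ) : ℝ) / ℓ ∈ Icc (0 : ℝ) 1 :=
    ⟨div_nonneg (by exact_mod_cast h₀) hℓ'.le, div_le_one_of_le₀ (by exact_mod_cast h₁) hℓ'.le⟩
  have hvuδ : |(((j : ℤ) + m : ℤ) : ℝ) / ℓ - j / ℓ| < δ := by
    rwa [hvu, abs_div, Nat.abs_cast, div_lt_iff₀ hℓ']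
  simpa only [hvu, abs_div, Nat.abs_cast] using hF _ hu _ hv hvuδ

theorem stmt_6_general (M c θ mk ml : ℝ) (hM : 1 < M) (hc : 0 < c) (hθ : 0 < θ)
    (hmk : mk ∈ Set.Ioc (0:ℝ) 1) (hml : ml ∈ Set.Ioc (0:ℝ) 1)
    (f f' φ φ' ψφ : ℝ → ℝ)
    (hfderiv : ∀ x ∈ Icc (0:ℝ) 1, HasDerivWithinAt f (f' x) (Icc 0 1) x)
    (hφderiv : ∀ x ∈ Icc (0:ℝ) 1, HasDerivWithinAt φ (φ' x) (Icc 0 1) x)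
    (hfcont : ContinuousOn f' (Icc 0 1)) (hφcont : ContinuousOn φ' (Icc 0 1))
    (hφlb : ∀ x ∈ Icc (0:ℝ) 1, M⁻¹ < φ' x)
    (hinv : ∀ x ∈ Icc (0:ℝ) 1, ψφ x ∈ Icc (0:ℝ) 1 ∧ φ (ψφ x) = x) :
    ∀ ε > 0, ∃ N : ℕ, ∀ n : ℕ, N ≤ n →
      ∀ j : ℕ, j ≤ ⌈ml * n⌉₊ → ∀ m : ℤ,
        |(m : ℝ)| ≤ c * (⌈θ * Real.sqrt n⌉₊ : ℝ) →
        0 ≤ (j : ℤ) + m → (j : ℤ) + m ≤ (⌈ml * n⌉₊ : ℤ) →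
        (1 / (⌈θ * Real.sqrt n⌉₊ : ℝ)) *
          |(⌈mk * n⌉₊ : ℝ) * f (ψφ ((((j : ℤ) + m : ℤ) : ℝ) / (⌈ml * n⌉₊ : ℝ)))
            - (⌈mk * n⌉₊ : ℝ) * f (ψφ ((j : ℝ) / (⌈ml * n⌉₊ : ℝ)))
            - ((⌈mk * n⌉₊ : ℝ) * f' (ψφ ((j : ℝ) / (⌈ml * n⌉₊ : ℝ)))
                / ((⌈ml * n⌉₊ : ℝ) * φ' (ψφ ((j : ℝ) / (⌈ml * n⌉₊ : ℝ))))) * (m : ℝ)| < ε := by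
  intro ε hε
  have hml₀ : 0 < ml := hml.1
  set η := ε * ml / (2 * c)
  have hη : 0 < η := by positivity
  obtain ⟨δ, hδ, htaylor⟩ := isCompact_Icc.exists_forall_abs_comp_sub_sub_div_mul_le
    (convex_Icc 0 1) hfderiv hfcont hφderiv hφcont (inv_pos.2 (zero_lt_one.trans hM))
    (fun x hx => (hφlb x hx).le) (fun x hx => (hinv x hx).1) (fun x hx => (hinv x hx).2)
    (ε := η) hη
  obtain ⟨N, hN⟩ := eventually_atTop.1
    (eventually_mul_natCeil_mul_sqrt_lt_mul_natCeil_mul (c := c) hθ.le hml₀ hδ)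
  refine ⟨N, fun n hn j hj m hm hjm₀ hjm₁ => ?_⟩
  obtain ⟨hnl, hmδ⟩ := hN n hn
  have hgrid := abs_sub_sub_mul_div_le_of_forall_abs_sub_sub_mul_le htaylor hnl hj hjm₀ hjm₁
    (hm.trans_lt hmδ)
  have hnk₀ : 0 ≤ (⌈mk * n⌉₊ : ℝ) := Nat.cast_nonneg _
  set nk : ℝ := (⌈mk * n⌉₊ : ℝ)
  set nl : ℝ := (⌈ml * n⌉₊ : ℝ)
  set kn : ℝ := (⌈θ * √n⌉₊ : ℝ)
  calc _ = 1 / kn * |nk * (f (ψφ ((((j : ℤ) + m : ℤ) : ℝ) / nl)) - f (ψφ (j / nl))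
        - f' (ψφ (j / nl)) / φ' (ψφ (j / nl)) * (m / nl))| := by
        congr 2
        ring
    _ ≤ 1 / kn * (nk * (η * (|(m : ℝ)| / nl))) := by
        rw [abs_mul, abs_of_nonneg hnk₀]
        gcongr
    _ = η * (nk / nl) * (|(m : ℝ)| / kn) := by ring
    _ ≤ η * (1 / ml) * c :=
        mul_le_mul
          (mul_le_mul_of_nonneg_left (natCeil_mul_div_natCeil_mul_le hmk.2 hml₀ n) hη.le)
          (div_le_of_le_mul₀ (Nat.cast_nonneg _) hc.le hm) (by positivity) (by positivity)
    _ = ε / 2 := by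
        simp only [η]
        field_simp
    _ < ε := half_lt_self hε

/-- Uniform first-order Taylor approximation relating the indices of one
time-transformed grid to the other:
`(1/k_n)·max | n_k f(φ⁻¹((j+m)/n_l)) − n_k f(s_j) − (n_k f'(s_j)/(n_l φ'(s_j)))·m | → 0`
over `0 ≤ j ≤ n_l`, `|m| ≤ c·k_n`, `0 ≤ j+m ≤ n_l`, where `n_k = ⌈m_k n⌉`,
`n_l = ⌈m_l n⌉`, `k_n = ⌈θ√n⌉`, `s_j = φ⁻¹(j/n_l)`. -/
theorem stmt_6 (M c θ mk ml : ℝ) (hM : 1 < M) (hc : 0 < c) (hθ : 0 < θ)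
    (hmk : mk ∈ Set.Ioc (0:ℝ) 1) (hml : ml ∈ Set.Ioc (0:ℝ) 1)
    (f f' φ φ' ψφ : ℝ → ℝ)
    (hfmono : StrictMonoOn f (Icc 0 1)) (hφmono : StrictMonoOn φ (Icc 0 1))
    (hfbij : Set.BijOn f (Icc 0 1) (Icc 0 1)) (hφbij : Set.BijOn φ (Icc 0 1) (Icc 0 1))
    (hf0 : f 0 = 0) (hf1 : f 1 = 1) (hφ0 : φ 0 = 0) (hφ1 : φ 1 = 1)
    (hfderiv : ∀ x ∈ Icc (0:ℝ) 1, HasDerivWithinAt f (f' x) (Icc 0 1) x)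
    (hφderiv : ∀ x ∈ Icc (0:ℝ) 1, HasDerivWithinAt φ (φ' x) (Icc 0 1) x)
    (hfcont : ContinuousOn f' (Icc 0 1)) (hφcont : ContinuousOn φ' (Icc 0 1))
    (hflb : ∀ x ∈ Icc (0:ℝ) 1, M⁻¹ < f' x) (hfub : ∀ x ∈ Icc (0:ℝ) 1, f' x < M)
    (hφlb : ∀ x ∈ Icc (0:ℝ) 1, M⁻¹ < φ' x) (hφub : ∀ x ∈ Icc (0:ℝ) 1, φ' x < M)
    (hinv : ∀ x ∈ Icc (0:ℝ) 1, ψφ x ∈ Icc (0:ℝ) 1 ∧ φ (ψφ x) = x) :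
    ∀ ε > 0, ∃ N : ℕ, ∀ n : ℕ, N ≤ n →
      ∀ j : ℕ, j ≤ ⌈ml * n⌉₊ → ∀ m : ℤ,
        |(m : ℝ)| ≤ c * (⌈θ * Real.sqrt n⌉₊ : ℝ) →
        0 ≤ (j : ℤ) + m → (j : ℤ) + m ≤ (⌈ml * n⌉₊ : ℤ) →
        (1 / (⌈θ * Real.sqrt n⌉₊ : ℝ)) *
          |(⌈mk * n⌉₊ : ℝ) * f (ψφ ((((j : ℤ) + m : ℤ) : ℝ) / (⌈ml * n⌉₊ : ℝ)))
            - (⌈mk * n⌉₊ : ℝ) * f (ψφ ((j : ℝ) / (⌈ml * n⌉₊ : ℝ)))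
            - ((⌈mk * n⌉₊ : ℝ) * f' (ψφ ((j : ℝ) / (⌈ml * n⌉₊ : ℝ)))
                / ((⌈ml * n⌉₊ : ℝ) * φ' (ψφ ((j : ℝ) / (⌈ml * n⌉₊ : ℝ))))) * (m : ℝ)| < ε :=
  stmt_6_general M c θ mk ml hM hc hθ hmk hml f f' φ φ' ψφ hfderiv hφderiv hfcont hφcont hφlb hinv
end

section
/- Let g(x) = min(x, 1−x) for x ∈ [0,1] and g(x) = 0 otherwise, and let g'(x) = 1 for x ∈ (0, 1/2), g'(x) = −1 for x ∈ (1/2, 1), and g'(x) = 0 otherwise. Define ψ̄(s) = ∫_0^1 ∫_{u−1+s}^{1+s+u} g(u)·g'(v) dv du for s ∈ ℝ. Then κ̄ := ∫_{−2}^{2} ψ̄(s)² ds = 151/20160. -/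
open intervalIntegral

noncomputable def tri (x : ℝ) : ℝ :=
  if x ∈ Set.Icc (0:ℝ) 1 then min x (1 - x) else 0

noncomputable def triDeriv (x : ℝ) : ℝ :=
  if x ∈ Set.Ioo (0:ℝ) (1/2) then 1 else if x ∈ Set.Ioo (1/2 : ℝ) 1 then -1 else 0

noncomputable def psiBarTri (s : ℝ) : ℝ :=
  ∫ u in (0:ℝ)..1, ∫ v in (u - 1 + s)..(1 + s + u), tri u * triDeriv v

/-!
Let `R(t) = ∫₀¹ g(u) g(u + t) du` be the autocorrelation of `g`. Integrating out `v` by the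
fundamental theorem of calculus (`g'` is the derivative of `g` off `{0, 1/2, 1}`) gives
`ψ̄(s) = R(s + 1) - R(s - 1)`. As `R` is even and vanishes outside `(-1, 1)`, only one term
survives on each side of `0`, so both halves of `κ̄` equal `∫_{-1}^{1} R² = 2 ∫₀¹ R²`, where `R`
is the cubic `1/12 - t²/2 + t³/2` on `[0, 1/2]` and `(1 - t)³/6` on `[1/2, 1]`.
-/

open Set MeasureTheory


theorem tri_eq_max_min (x : ℝ) : tri x = max 0 (min x (1 - x)) := by
  unfold tri
  split_ifs with h <;> simp only [mem_Icc, not_and_or, not_le] at h <;> grind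

@[fun_prop]
theorem continuous_tri : Continuous tri := by
  simp only [funext tri_eq_max_min]; fun_prop

theorem tri_one_sub (x : ℝ) : tri (1 - x) = tri x := by
  simp [tri_eq_max_min, min_comm]

theorem tri_of_nonpos {x : ℝ} (hx : x ≤ 0) : tri x = 0 := by
  grind [tri_eq_max_min]

theorem tri_of_one_le {x : ℝ} (hx : 1 ≤ x) : tri x = 0 := by
  grind [tri_eq_max_min]

theorem tri_of_le_half {x : ℝ} (h₀ : 0 ≤ x) (h : x ≤ 1 / 2) : tri x = x := by
  grind [tri_eq_max_min]

theorem tri_of_half_le {x : ℝ} (h : 1 / 2 ≤ x) (h₁ : x ≤ 1) : tri x = 1 - x := by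
  grind [tri_eq_max_min]

theorem hasDerivAt_tri {x : ℝ} (h₀ : x ≠ 0) (h : x ≠ 1 / 2) (h₁ : x ≠ 1) :
    HasDerivAt tri (triDeriv x) x := by
  have local_eq {s : Set ℝ} {f : ℝ → ℝ} {c : ℝ} (hs : IsOpen s) (hx : x ∈ s) (hf : EqOn tri f s)
      (hc : HasDerivAt f c x) (hd : triDeriv x = c) : HasDerivAt tri (triDeriv x) x :=
    hd ▸ hc.congr_of_eventuallyEq (hf.eventuallyEq_of_mem (hs.mem_nhds hx))
  rcases lt_or_gt_of_ne h₀ with hx0 | hx0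
  · refine local_eq isOpen_Iio hx0 (fun y hy => tri_of_nonpos hy.le) (hasDerivAt_const x 0) ?_
    simp only [triDeriv, mem_Ioo]; grind
  rcases lt_or_gt_of_ne h with hx1 | hx1
  · refine local_eq isOpen_Ioo ⟨hx0, hx1⟩ (fun y hy => tri_of_le_half hy.1.le hy.2.le)
      (hasDerivAt_id x) ?_
    simp only [triDeriv, mem_Ioo]; grind
  rcases lt_or_gt_of_ne h₁ with hx2 | hx2
  · refine local_eq isOpen_Ioo ⟨hx1, hx2⟩ (fun y hy => tri_of_half_le hy.1.le hy.2.le)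
      ((hasDerivAt_id x).const_sub 1) ?_
    simp only [triDeriv, mem_Ioo]; grind
  · refine local_eq isOpen_Ioi hx2 (fun y hy => tri_of_one_le hy.le) (hasDerivAt_const x 0) ?_
    simp only [triDeriv, mem_Ioo]; grind

theorem intervalIntegrable_triDeriv (a b : ℝ) : IntervalIntegrable triDeriv volume a b := by
  have hm : Measurable triDeriv :=
    measurable_const.ite measurableSet_Ioo
      (measurable_const.ite measurableSet_Ioo measurable_const)
  refine (intervalIntegrable_const (c := (1:ℝ))).mono_fun' hm.aestronglyMeasurable
    (ae_of_all _ fun x => ?_)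
  show ‖triDeriv x‖ ≤ 1
  unfold triDeriv; split_ifs <;> norm_num

theorem integral_triDeriv (a b : ℝ) : ∫ v in a..b, triDeriv v = tri b - tri a :=
  integral_eq_of_hasDerivAt_off_countable tri triDeriv
    ((countable_singleton 1).insert _ |>.insert _) continuous_tri.continuousOn
    (fun x hx => by
      simp only [mem_sdiff, mem_insert_iff, mem_singleton_iff, not_or] at hx
      exact hasDerivAt_tri hx.2.1 hx.2.2.1 hx.2.2.2)
    (intervalIntegrable_triDeriv a b)

noncomputable def triAutocorr (t : ℝ) : ℝ :=
  ∫ u in (0:ℝ)..1, tri u * tri (u + t)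

@[fun_prop]
theorem continuous_triAutocorr : Continuous triAutocorr :=
  continuous_parametric_intervalIntegral_of_continuous' (by fun_prop) 0 1

theorem psiBarTri_eq_triAutocorr_sub (s : ℝ) :
    psiBarTri s = triAutocorr (s + 1) - triAutocorr (s - 1) := by
  have inner (u : ℝ) : ∫ v in (u - 1 + s)..(1 + s + u), tri u * triDeriv v =
      tri u * tri (u + (s + 1)) - tri u * tri (u + (s - 1)) := by
    rw [intervalIntegral.integral_const_mul, integral_triDeriv]; ring_nf
  simp only [psiBarTri, inner, triAutocorr]
  exact integral_sub (Continuous.intervalIntegrable (by fun_prop) _ _)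
    (Continuous.intervalIntegrable (by fun_prop) _ _)

theorem triAutocorr_neg (t : ℝ) : triAutocorr (-t) = triAutocorr t := by
  calc triAutocorr (-t) = ∫ u in (0:ℝ)..1, (fun w => tri w * tri (w + t)) (1 - u) := by
        simp only [triAutocorr, tri_one_sub, show ∀ u, 1 - u + t = 1 - (u + -t) by intros; ring]
    _ = triAutocorr t := by
        rw [integral_comp_sub_left (fun w => tri w * tri (w + t))]; norm_num [triAutocorr]

theorem integral_tri_mul_tri_add_eq_zero {a b t : ℝ} (hab : a ≤ b) (ht : 1 ≤ a + t) :
    ∫ u in a..b, tri u * tri (u + t) = 0 := by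
  refine (integral_congr_Ioo_of_le hab fun u hu => ?_).trans integral_zero
  simp [tri_of_one_le (by linarith [hu.1] : 1 ≤ u + t)]

theorem triAutocorr_of_one_le {t : ℝ} (ht : 1 ≤ t) : triAutocorr t = 0 :=
  integral_tri_mul_tri_add_eq_zero zero_le_one (by linarith)

theorem triAutocorr_of_le_neg_one {t : ℝ} (ht : t ≤ -1) : triAutocorr t = 0 := by
  rw [← neg_neg t, triAutocorr_neg, triAutocorr_of_one_le (by linarith)]

theorem triAutocorr_of_half_le {t : ℝ} (ht : 1 / 2 ≤ t) (ht₁ : t ≤ 1) :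
    triAutocorr t = (1 - t) ^ 3 / 6 := by
  have hc : Continuous fun u => tri u * tri (u + t) := by fun_prop
  have overlap : ∫ u in (0:ℝ)..(1 - t), tri u * tri (u + t) =
      ∫ u in (0:ℝ)..(1 - t), u * (1 - t - u) :=
    integral_congr_Ioo_of_le (by linarith) fun u hu => by
      rw [tri_of_le_half hu.1.le (by linarith [hu.2]),
        tri_of_half_le (by linarith [hu.1]) (by linarith [hu.2])]
      ring
  rw [triAutocorr, ← integral_add_adjacent_intervals (b := 1 - t) (hc.intervalIntegrable _ _)
      (hc.intervalIntegrable _ _), overlap,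
    integral_tri_mul_tri_add_eq_zero (by linarith) (by linarith), add_zero,
    integral_deriv_eq_sub' (fun u => (1 - t) * u ^ 2 / 2 - u ^ 3 / 3)
      (by ext u; simp (disch := fun_prop); ring) (fun _ _ => by fun_prop) (by fun_prop)]
  ring

theorem triAutocorr_of_le_half {t : ℝ} (ht₀ : 0 ≤ t) (ht : t ≤ 1 / 2) :
    triAutocorr t = 1 / 12 - t ^ 2 / 2 + t ^ 3 / 2 := by
  have hc : Continuous fun u => tri u * tri (u + t) := by fun_prop
  have rising : ∫ u in (0:ℝ)..(1 / 2 - t), tri u * tri (u + t) =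
      ∫ u in (0:ℝ)..(1 / 2 - t), u * (u + t) :=
    integral_congr_Ioo_of_le (by linarith) fun u hu => by
      rw [tri_of_le_half hu.1.le (by linarith [hu.2]),
        tri_of_le_half (by linarith [hu.1]) (by linarith [hu.2])]
  have middle : ∫ u in (1 / 2 - t)..(1 / 2), tri u * tri (u + t) =
      ∫ u in (1 / 2 - t)..(1 / 2), u * (1 - t - u) :=
    integral_congr_Ioo_of_le (by linarith) fun u hu => by
      rw [tri_of_le_half (by linarith [hu.1]) hu.2.le,
        tri_of_half_le (by linarith [hu.1]) (by linarith [hu.2])]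
      ring
  have falling : ∫ u in (1 / 2)..(1 - t), tri u * tri (u + t) =
      ∫ u in (1 / 2)..(1 - t), (1 - u) * (1 - t - u) :=
    integral_congr_Ioo_of_le (by linarith) fun u hu => by
      rw [tri_of_half_le hu.1.le (by linarith [hu.2]),
        tri_of_half_le (by linarith [hu.1]) (by linarith [hu.2])]
      ring
  rw [triAutocorr, ← integral_add_adjacent_intervals (b := 1 - t) (hc.intervalIntegrable _ _)
      (hc.intervalIntegrable _ _),
    ← integral_add_adjacent_intervals (b := 1 / 2) (hc.intervalIntegrable _ _)
      (hc.intervalIntegrable _ _),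
    ← integral_add_adjacent_intervals (b := 1 / 2 - t) (hc.intervalIntegrable _ _)
      (hc.intervalIntegrable _ _), rising, middle, falling,
    integral_tri_mul_tri_add_eq_zero (by linarith) (by linarith), add_zero,
    integral_deriv_eq_sub' (fun u => u ^ 3 / 3 + t * u ^ 2 / 2)
      (by ext u; simp (disch := fun_prop); ring) (fun _ _ => by fun_prop) (by fun_prop),
    integral_deriv_eq_sub' (fun u => (1 - t) * u ^ 2 / 2 - u ^ 3 / 3)
      (by ext u; simp (disch := fun_prop); ring) (fun _ _ => by fun_prop) (by fun_prop),
    integral_deriv_eq_sub' (fun u => -((1 - u) ^ 3 / 3 - t * (1 - u) ^ 2 / 2))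
      (by ext u; simp (disch := fun_prop); ring) (fun _ _ => by fun_prop) (by fun_prop)]
  ring

theorem integral_triAutocorr_sq : ∫ t in (-1:ℝ)..1, triAutocorr t ^ 2 = 151 / 40320 := by
  have hc : Continuous fun t => triAutocorr t ^ 2 := by fun_prop
  have near : ∫ t in (0:ℝ)..(1 / 2), triAutocorr t ^ 2 =
      ∫ t in (0:ℝ)..(1 / 2), (1 / 12 - t ^ 2 / 2 + t ^ 3 / 2) ^ 2 :=
    integral_congr_Ioo_of_le (by norm_num) fun t ht => by
      rw [triAutocorr_of_le_half ht.1.le ht.2.le]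
  have far : ∫ t in (1 / 2:ℝ)..1, triAutocorr t ^ 2 = ∫ t in (1 / 2:ℝ)..1, (1 - t) ^ 6 / 36 :=
    integral_congr_Ioo_of_le (by norm_num) fun t ht => by
      rw [triAutocorr_of_half_le ht.1.le ht.2.le]; ring
  have even : ∫ t in (-1:ℝ)..0, triAutocorr t ^ 2 = ∫ t in (0:ℝ)..1, triAutocorr t ^ 2 := by
    simpa [triAutocorr_neg] using
      (integral_comp_neg (fun t => triAutocorr t ^ 2) (a := 0) (b := 1)).symm
  rw [← integral_add_adjacent_intervals (b := 0) (hc.intervalIntegrable _ _)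
      (hc.intervalIntegrable _ _), even,
    ← integral_add_adjacent_intervals (b := 1 / 2) (hc.intervalIntegrable _ _)
      (hc.intervalIntegrable _ _), near, far,
    integral_deriv_eq_sub'
      (fun t => t / 144 - t ^ 3 / 36 + t ^ 4 / 48 + t ^ 5 / 20 - t ^ 6 / 12 + t ^ 7 / 28)
      (by ext t; simp (disch := fun_prop); ring) (fun _ _ => by fun_prop) (by fun_prop),
    integral_deriv_eq_sub' (fun t => -(1 - t) ^ 7 / 252)
      (by ext t; simp (disch := fun_prop); ring) (fun _ _ => by fun_prop) (by fun_prop)]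
  norm_num

theorem psiBarTri_of_nonpos {s : ℝ} (hs : s ≤ 0) : psiBarTri s = triAutocorr (s + 1) := by
  rw [psiBarTri_eq_triAutocorr_sub, triAutocorr_of_le_neg_one (t := s - 1) (by linarith),
    sub_zero]

theorem psiBarTri_of_nonneg {s : ℝ} (hs : 0 ≤ s) : psiBarTri s = -triAutocorr (s - 1) := by
  rw [psiBarTri_eq_triAutocorr_sub, triAutocorr_of_one_le (t := s + 1) (by linarith), zero_sub]

@[fun_prop]
theorem continuous_psiBarTri : Continuous psiBarTri := by
  rw [funext psiBarTri_eq_triAutocorr_sub]; fun_prop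

/-- For the triangular weight function `g(x) = min(x, 1−x)` on `[0,1]` with
a.e. derivative `g'`, `κ̄ = ∫_{−2}^{2} ψ̄(s,1)² ds = 151/20160`. -/
theorem stmt_13 : ∫ s in (-2:ℝ)..2, (psiBarTri s) ^ 2 = 151 / 20160 := by
  have hc : Continuous fun s => psiBarTri s ^ 2 := by fun_prop
  have left : ∫ s in (-2:ℝ)..0, psiBarTri s ^ 2 = ∫ t in (-1:ℝ)..1, triAutocorr t ^ 2 := by
    rw [integral_congr_Ioo_of_le (g := fun s => triAutocorr (s + 1) ^ 2) (by norm_num)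
      fun s hs => by rw [psiBarTri_of_nonpos hs.2.le],
      integral_comp_add_right (fun t => triAutocorr t ^ 2)]
    norm_num
  have right : ∫ s in (0:ℝ)..2, psiBarTri s ^ 2 = ∫ t in (-1:ℝ)..1, triAutocorr t ^ 2 := by
    rw [integral_congr_Ioo_of_le (g := fun s => triAutocorr (s - 1) ^ 2) (by norm_num)
      fun s hs => by rw [psiBarTri_of_nonneg hs.1.le, neg_sq],
      integral_comp_sub_right (fun t => triAutocorr t ^ 2)]
    norm_num
  rw [← integral_add_adjacent_intervals (b := 0) (hc.intervalIntegrable _ _)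
    (hc.intervalIntegrable _ _), left, right, integral_triAutocorr_sq]
  norm_num
end

section
/- Let (ξ_p)_{p∈ℕ} be i.i.d. ℝ^d-valued random variables with E[ξ_0] = 0 and E[‖ξ_0‖²] < ∞, and set Ψ^{kl} = E[ξ_0^k·ξ_0^l] for 1 ≤ k, l ≤ d. Then for every 1 ≤ k, l ≤ d, almost surely, −(1/n)·Σ_{p=1}^{n−1} (ξ_p^k − ξ_{p−1}^k)·(ξ_{p+1}^l − ξ_p^l) → Ψ^{kl} as n → ∞. -/
/-!
Expanding the product, the estimator is, up to boundary terms, the Cesàro average of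
`ξ_{p+1}^k ξ_{p+1}^l - ξ_{p+1}^k ξ_{p+2}^l + ξ_p^k ξ_{p+2}^l - ξ_p^k ξ_{p+1}^l`.
Each sequence `p ↦ ξ_{p+s}^k ξ_{p+t}^l` is identically distributed (an i.i.d. sequence has a
shift-invariant law) and `m`-dependent for `m = max s t + 1`; along every residue class modulo `m`
it is pairwise independent, so Etemadi's strong law applies class by class. The limit is
`E[ξ_0^k ξ_0^l] = Ψ^{kl}` for `s = t` and `E[ξ_s^k] E[ξ_t^l] = 0` for `s ≠ t`.
-/

open MeasureTheory ProbabilityTheory Filter Finset Topology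

/-- `(n + m - 1 - r) / m` is the number of `p < n` with `p ≡ r [MOD m]`. -/
theorem Finset.sum_range_eq_sum_residues {M : Type*} [AddCommMonoid M] (a : ℕ → M) {m : ℕ}
    (hm : 0 < m) (n : ℕ) :
    ∑ p ∈ range n, a p = ∑ r ∈ range m, ∑ j ∈ range ((n + m - 1 - r) / m), a (m * j + r) := by
  rw [sum_sigma']
  refine sum_bij' (fun p _ => ⟨p % m, p / m⟩) (fun x _ => m * x.2 + x.1) ?_ ?_ ?_ ?_ ?_
  · intro p hp
    have := Nat.div_add_mod p m
    have := Nat.mod_lt p hm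
    simp only [mem_sigma, mem_range, Nat.lt_div_iff_mul_lt hm] at hp ⊢
    grind
  · rintro ⟨r, j⟩ h
    simp only [mem_sigma, mem_range, Nat.lt_div_iff_mul_lt hm] at h ⊢
    grind
  · intro p _
    exact Nat.div_add_mod p m
  · rintro ⟨r, j⟩ h
    simp only [mem_sigma, mem_range] at h
    simp [Nat.mod_eq_of_lt h.1, Nat.mul_add_div hm, Nat.div_eq_of_lt h.1]
  · intro p _
    rw [Nat.div_add_mod]

theorem tendsto_div_comp_of_le {s : ℕ → ℝ} {J : ℕ → ℕ}
    (hs : Tendsto (fun j : ℕ => s j / j) atTop (𝓝 0)) (hJ : Tendsto J atTop atTop)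
    (hle : ∀ n, J n ≤ n) :
    Tendsto (fun n : ℕ => s (J n) / n) atTop (𝓝 0) := by
  refine squeeze_zero_norm' ?_ (tendsto_zero_iff_norm_tendsto_zero.1 (hs.comp hJ))
  filter_upwards [hJ.eventually_ge_atTop 1] with n hn
  have hJpos : (0 : ℝ) < J n := by exact_mod_cast hn
  simp only [Function.comp_apply, norm_div, Real.norm_natCast]
  exact div_le_div_of_nonneg_left (norm_nonneg _) hJpos (by exact_mod_cast hle n)

theorem tendsto_sum_range_div_zero_of_residues (a : ℕ → ℝ) {m : ℕ} (hm : 0 < m)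
    (h : ∀ r < m, Tendsto (fun J : ℕ => (∑ j ∈ range J, a (m * j + r)) / J) atTop (𝓝 0)) :
    Tendsto (fun n : ℕ => (∑ p ∈ range n, a p) / n) atTop (𝓝 0) := by
  have hJ (r : ℕ) : Tendsto (fun n : ℕ => (n + m - 1 - r) / m) atTop atTop := by
    refine tendsto_atTop_atTop.2 fun b => ⟨b * m + r, fun n hn => ?_⟩
    rw [Nat.le_div_iff_mul_le hm]
    omega
  have hJle (r n : ℕ) : (n + m - 1 - r) / m ≤ n := by
    refine not_lt.1 fun hlt => ?_
    rw [Nat.lt_div_iff_mul_lt hm] at hlt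
    have := Nat.le_mul_of_pos_right n hm
    omega
  have hsum := tendsto_finsetSum (range m) fun r hr =>
    tendsto_div_comp_of_le (h r (mem_range.1 hr)) (hJ r) (hJle r)
  rw [sum_const_zero] at hsum
  refine hsum.congr fun n => ?_
  rw [sum_range_eq_sum_residues a hm, sum_div]

theorem tendsto_sum_range_sub_div_iff (a : ℕ → ℝ) (L : ℝ) :
    Tendsto (fun n : ℕ => (∑ i ∈ range n, (a i - L)) / n) atTop (𝓝 0) ↔
      Tendsto (fun n : ℕ => (∑ i ∈ range n, a i) / n) atTop (𝓝 L) := by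
  refine (tendsto_congr' ?_).trans tendsto_sub_nhds_zero_iff
  filter_upwards [eventually_ne_atTop 0] with n hn
  rw [sum_sub_distrib, sum_const, card_range, nsmul_eq_mul]
  field_simp

theorem tendsto_sum_range_div_of_residues (a : ℕ → ℝ) {m : ℕ} (hm : 0 < m) {L : ℝ}
    (h : ∀ r < m, Tendsto (fun J : ℕ => (∑ j ∈ range J, a (m * j + r)) / J) atTop (𝓝 L)) :
    Tendsto (fun n : ℕ => (∑ p ∈ range n, a p) / n) atTop (𝓝 L) := by
  rw [← tendsto_sum_range_sub_div_iff]
  refine tendsto_sum_range_div_zero_of_residues _ hm fun r hr => ?_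
  exact (tendsto_sum_range_sub_div_iff (fun j => a (m * j + r)) L).2 (h r hr)

theorem Filter.Tendsto.sum_range_pred_div {a : ℕ → ℝ} {L : ℝ}
    (h : Tendsto (fun n : ℕ => (∑ i ∈ range n, a i) / n) atTop (𝓝 L)) :
    Tendsto (fun n : ℕ => (∑ i ∈ range (n - 1), a i) / n) atTop (𝓝 L) := by
  rw [← tendsto_add_atTop_iff_nat 1]
  have := h.mul (tendsto_natCast_div_add_atTop (1 : ℝ))
  rw [mul_one] at this
  refine this.congr' ?_
  filter_upwards [eventually_ne_atTop 0] with n hn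
  simp only [Nat.add_sub_cancel, Nat.cast_add, Nat.cast_one]
  field_simp

namespace ProbabilityTheory

variable {Ω : Type*} {mΩ : MeasurableSpace Ω} {μ : Measure Ω}

theorem strong_law_ae_real_of_mDependent {Y : ℕ → Ω → ℝ} {m : ℕ} (hm : 0 < m)
    (hint : Integrable (Y 0) μ) (hindep : ∀ i j, i + m ≤ j → IndepFun (Y i) (Y j) μ)
    (hident : ∀ i, IdentDistrib (Y i) (Y 0) μ μ) :
    ∀ᵐ ω ∂μ, Tendsto (fun n : ℕ => (∑ i ∈ range n, Y i ω) / n) atTop (𝓝 μ[Y 0]) := by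
  have hresidue (r : ℕ) : ∀ᵐ ω ∂μ,
      Tendsto (fun J : ℕ => (∑ j ∈ range J, Y (m * j + r) ω) / J) atTop (𝓝 μ[Y 0]) := by
    have hpair : Pairwise fun i j => IndepFun (Y (m * i + r)) (Y (m * j + r)) μ := by
      intro i j hij
      rcases hij.lt_or_gt with h | h
      · exact hindep _ _ (by nlinarith)
      · exact (hindep _ _ (by nlinarith)).symm
    have hslln := strong_law_ae_real (fun j => Y (m * j + r)) ((hident _).integrable_iff.2 hint)
      hpair fun j => (hident _).trans (hident _).symm
    rwa [(hident _).integral_eq] at hslln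
  filter_upwards [ae_all_iff.2 hresidue] with ω hω
  exact tendsto_sum_range_div_of_residues _ hm fun r _ => hω r

theorem iIndepFun.identDistrib_shift {E : Type*} [MeasurableSpace E] {ξ : ℕ → Ω → E}
    (hmeas : ∀ p, Measurable (ξ p)) (hindep : iIndepFun ξ μ)
    (hident : ∀ p, μ.map (ξ p) = μ.map (ξ 0)) (s : ℕ) :
    IdentDistrib (fun ω i => ξ (s + i) ω) (fun ω i => ξ i ω) μ μ where
  aemeasurable_fst := (measurable_pi_iff.2 fun i => hmeas _).aemeasurable
  aemeasurable_snd := (measurable_pi_iff.2 hmeas).aemeasurable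
  map_eq := by
    rw [(hindep.precomp (add_right_injective s)).map_fun_eq_infinitePi_map (fun i => hmeas _),
      hindep.map_fun_eq_infinitePi_map hmeas]
    simp only [hident]

theorem strong_law_ae_real_comp_lags {E : Type*} [MeasurableSpace E] {ξ : ℕ → Ω → E}
    (hmeas : ∀ p, Measurable (ξ p)) (hindep : iIndepFun ξ μ)
    (hident : ∀ p, μ.map (ξ p) = μ.map (ξ 0)) {f : E × E → ℝ} (hf : Measurable f) (s t : ℕ)
    (hint : Integrable (fun ω => f (ξ s ω, ξ t ω)) μ) :
    ∀ᵐ ω ∂μ, Tendsto (fun n : ℕ => (∑ p ∈ range n, f (ξ (p + s) ω, ξ (p + t) ω)) / n) atTop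
      (𝓝 (∫ ω, f (ξ s ω, ξ t ω) ∂μ)) := by
  set Y : ℕ → Ω → ℝ := fun p ω => f (ξ (p + s) ω, ξ (p + t) ω)
  have hF : Measurable fun x : ℕ → E => f (x s, x t) := by fun_prop
  have hident_Y (p : ℕ) : IdentDistrib (Y p) (fun ω => f (ξ s ω, ξ t ω)) μ μ :=
    (hindep.identDistrib_shift hmeas hident p).comp hF
  have hindep_Y (p q : ℕ) (hpq : p + (max s t + 1) ≤ q) : IndepFun (Y p) (Y q) μ :=
    (hindep.indepFun_prodMk_prodMk hmeas _ _ _ _ (by omega) (by omega) (by omega)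
      (by omega)).comp hf hf
  have hslln := strong_law_ae_real_of_mDependent (Nat.succ_pos _)
    ((hident_Y 0).integrable_iff.2 hint) hindep_Y fun p => (hident_Y p).trans (hident_Y 0).symm
  rwa [(hident_Y 0).integral_eq] at hslln

end ProbabilityTheory

section EuclideanCoordinates

variable {Ω : Type*} [MeasurableSpace Ω] {μ : Measure Ω} {d : ℕ}
  {ξ : ℕ → Ω → EuclideanSpace ℝ (Fin d)}

theorem memLp_two_coord (hmeas : ∀ p, Measurable (ξ p))
    (hident : ∀ p, μ.map (ξ p) = μ.map (ξ 0)) (hmom : Integrable (fun ω => ‖ξ 0 ω‖ ^ 2) μ)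
    (p : ℕ) (k : Fin d) : MemLp (fun ω => ξ p ω k) 2 μ := by
  have h0 : MemLp (ξ 0) 2 μ :=
    (memLp_two_iff_integrable_sq_norm (hmeas 0).aestronglyMeasurable).2 hmom
  have hp : IdentDistrib (ξ p) (ξ 0) μ μ :=
    ⟨(hmeas p).aemeasurable, (hmeas 0).aemeasurable, hident p⟩
  exact (EuclideanSpace.proj k : EuclideanSpace ℝ (Fin d) →L[ℝ] ℝ).comp_memLp'
    (hp.memLp_iff.2 h0)

theorem integrable_coord_mul_coord (hmeas : ∀ p, Measurable (ξ p))
    (hident : ∀ p, μ.map (ξ p) = μ.map (ξ 0)) (hmom : Integrable (fun ω => ‖ξ 0 ω‖ ^ 2) μ)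
    (s t : ℕ) (k l : Fin d) : Integrable (fun ω => ξ s ω k * ξ t ω l) μ :=
  (memLp_two_coord hmeas hident hmom s k).integrable_mul (memLp_two_coord hmeas hident hmom t l)

theorem integral_coord_mul_coord_self (hmeas : ∀ p, Measurable (ξ p))
    (hident : ∀ p, μ.map (ξ p) = μ.map (ξ 0)) (s : ℕ) (k l : Fin d) :
    ∫ ω, ξ s ω k * ξ s ω l ∂μ = ∫ ω, ξ 0 ω k * ξ 0 ω l ∂μ :=
  (IdentDistrib.comp ⟨(hmeas s).aemeasurable, (hmeas 0).aemeasurable, hident s⟩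
    (by fun_prop : Measurable fun x : EuclideanSpace ℝ (Fin d) => x k * x l)).integral_eq

theorem integral_coord_mul_coord_of_ne [IsFiniteMeasure μ] (hmeas : ∀ p, Measurable (ξ p))
    (hindep : iIndepFun ξ μ) (hident : ∀ p, μ.map (ξ p) = μ.map (ξ 0))
    (hmean : ∫ ω, ξ 0 ω ∂μ = 0) (hmom : Integrable (fun ω => ‖ξ 0 ω‖ ^ 2) μ)
    {s t : ℕ} (hst : s ≠ t) (k l : Fin d) :
    ∫ ω, ξ s ω k * ξ t ω l ∂μ = 0 := by
  have hproj (j : Fin d) : Measurable fun x : EuclideanSpace ℝ (Fin d) => x j := by fun_prop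
  have hcoord : ∫ ω, ξ s ω k ∂μ = 0 := by
    have h0 : Integrable (ξ 0) μ :=
      ((memLp_two_iff_integrable_sq_norm (hmeas 0).aestronglyMeasurable).2 hmom).integrable
        one_le_two
    calc ∫ ω, ξ s ω k ∂μ = ∫ ω, ξ 0 ω k ∂μ :=
          (IdentDistrib.comp ⟨(hmeas s).aemeasurable, (hmeas 0).aemeasurable, hident s⟩
            (hproj k)).integral_eq
      _ = 0 := by simpa [hmean] using (EuclideanSpace.proj (𝕜 := ℝ) k).integral_comp_comm h0
  have hst_indep : IndepFun (fun ω => ξ s ω k) (fun ω => ξ t ω l) μ :=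
    (hindep.indepFun hst).comp (hproj k) (hproj l)
  rw [hst_indep.integral_fun_mul_eq_mul_integral (by fun_prop) (by fun_prop), hcoord, zero_mul]

end EuclideanCoordinates

/-- Strong-law consistency of the noise-covariance estimator: for i.i.d.
centered square-integrable `ℝ^d`-valued `ξ_p` with covariance `Ψ`, almost
surely `−(1/n)·Σ_{p=1}^{n−1} (ξ_p^k − ξ_{p−1}^k)(ξ_{p+1}^l − ξ_p^l) → Ψ^{kl}`. -/
theorem stmt_19 {Ω : Type*} [MeasureSpace Ω] [IsProbabilityMeasure (ℙ : Measure Ω)]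
    (d : ℕ) (ξ : ℕ → Ω → EuclideanSpace ℝ (Fin d))
    (hmeas : ∀ p, Measurable (ξ p))
    (hindep : iIndepFun ξ ℙ)
    (hident : ∀ p, Measure.map (ξ p) ℙ = Measure.map (ξ 0) ℙ)
    (hmean : ∫ ω, ξ 0 ω ∂ℙ = 0)
    (hmom : Integrable (fun ω => ‖ξ 0 ω‖ ^ 2) ℙ)
    (Ψ : Fin d → Fin d → ℝ)
    (hΨ : ∀ k l, Ψ k l = ∫ ω, ξ 0 ω k * ξ 0 ω l ∂ℙ) :
    ∀ k l : Fin d, ∀ᵐ ω ∂ℙ, Tendsto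
      (fun n : ℕ => -(1 / (n : ℝ)) * ∑ p ∈ Finset.Ico 1 n,
        (ξ p ω k - ξ (p - 1) ω k) * (ξ (p + 1) ω l - ξ p ω l))
      atTop (nhds (Ψ k l)) := by
  intro k l
  have hlim (s t : ℕ) := strong_law_ae_real_comp_lags hmeas hindep hident
    (f := fun x => x.1 k * x.2 l) (by fun_prop) s t
    (integrable_coord_mul_coord hmeas hident hmom s t k l)
  have hzero {s t : ℕ} (hst : s ≠ t) :=
    integral_coord_mul_coord_of_ne hmeas hindep hident hmean hmom hst k l
  filter_upwards [hlim 1 1, hlim 1 2, hlim 0 2, hlim 0 1] with ω h11 h12 h02 h01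
  rw [integral_coord_mul_coord_self hmeas hident, ← hΨ] at h11
  rw [hzero (by norm_num)] at h12 h02 h01
  have hcomb : Tendsto (fun n : ℕ => (∑ i ∈ range n, (ξ (i + 1) ω k * ξ (i + 1) ω l
      - ξ (i + 1) ω k * ξ (i + 2) ω l + ξ i ω k * ξ (i + 2) ω l - ξ i ω k * ξ (i + 1) ω l)) / n)
      atTop (𝓝 (Ψ k l)) := by
    simpa only [sum_add_distrib, sum_sub_distrib, add_div, sub_div, sub_zero, add_zero]
      using ((h11.sub h12).add h02).sub h01
  refine hcomb.sum_range_pred_div.congr fun n => ?_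
  rw [sum_Ico_eq_sum_range, neg_mul, ← mul_neg, ← sum_neg_distrib, one_div_mul_eq_div]
  refine congrArg (· / (n : ℝ)) (sum_congr rfl fun i _ => ?_)
  rw [add_comm 1 i, Nat.add_sub_cancel]
  ring
end
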